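/- Assume m ≥ 2. Then for every z ∈ ℂ, D(z) = Σ_{i=0}^{m−1} Σ_{j=1}^{n} (φ_j + c_i/λ_j) · λ_j · z^{m−2} · ∏_{ℓ≠j} (z^m − λ_ℓ^m). -/

import Mathlib

open Matrix BigOperators

noncomputable section

/-- The block matrix `L̃` with diagonal blocks `Λ = diag(λ₁,…,λₙ)` at positions `(h, h+1)`:
its entry in row `(h,j)` and column `(i,k)` is `λⱼ` if `k = j` and `i = h + 1` in `ℤ/mℤ`,
and `0` otherwise. -/
def Ltilde (m n : ℕ) (lam : Fin n → ℂ) :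
    Matrix (ZMod m × Fin n) (ZMod m × Fin n) ℂ :=
  Matrix.of fun p q => if q.2 = p.2 ∧ q.1 = p.1 + 1 then lam p.2 else 0

/-- `|g| = g₀ + g₁ + ⋯ + g_{m-1}`. -/
def gAbs (m : ℕ) (g : ZMod m → ℂ) : ℂ :=
  ∑ s ∈ Finset.range m, g (s : ZMod m)

/-- `cᵢ = Σ_{r=0}^{i} g_r − Σ_{s=0}^{m−1} ((m−s)/m)·g_s`, the index `i` read modulo `m`. -/
def cConst (m : ℕ) (g : ZMod m → ℂ) (i : ZMod m) : ℂ :=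
  (∑ r ∈ Finset.range (i.val + 1), g (r : ZMod m)) -
    ∑ s ∈ Finset.range m, (((m : ℂ) - (s : ℂ)) / (m : ℂ)) * g (s : ZMod m)

/-- The (spinless) matrix `Q̃`: its entry in row `(h,j)` and column `(i,k)` vanishes unless
`h = i + 1` in `ℤ/mℤ`, in which case it equals `φⱼ + cᵢ/λⱼ` if `k = j`, and
`−|g|·λⱼ^{m−i−1}·λₖ^{i}/(λⱼ^m − λₖ^m)` if `k ≠ j` (where `i` is taken as its representative
in `{0,…,m−1}`). -/
def Qtilde (m n : ℕ) (g : ZMod m → ℂ) (lam phi : Fin n → ℂ) :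
    Matrix (ZMod m × Fin n) (ZMod m × Fin n) ℂ :=
  Matrix.of fun p q =>
    if p.1 = q.1 + 1 then
      if q.2 = p.2 then phi p.2 + cConst m g q.1 / lam p.2
      else -(gAbs m g) * lam p.2 ^ (m - q.1.val - 1) * lam q.2 ^ q.1.val /
        (lam p.2 ^ m - lam q.2 ^ m)
    else 0

/-- `A(z) = det(z·1 − L̃)`. -/
def Afun (m n : ℕ) [NeZero m] (lam : Fin n → ℂ) (z : ℂ) : ℂ :=
  (z • (1 : Matrix (ZMod m × Fin n) (ZMod m × Fin n) ℂ) - Ltilde m n lam).det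

/-- `D(z) = tr(Q̃ · adj(z·1 − L̃))`. -/
def Dfun (m n : ℕ) [NeZero m] (g : ZMod m → ℂ) (lam phi : Fin n → ℂ) (z : ℂ) : ℂ :=
  Matrix.trace (Qtilde m n g lam phi *
    (z • (1 : Matrix (ZMod m × Fin n) (ZMod m × Fin n) ℂ) - Ltilde m n lam).adjugate)

/-- `C(z) = w̃ · Q̃ · adj(z·1 − L̃) · ṽ`, where `ṽ` has entry `1` at each index `(0,j)` and `0`
elsewhere, and `w̃` has entry `|g|` at each index `(0,j)` and `0` elsewhere. -/
def Cfun (m n : ℕ) [NeZero m] (g : ZMod m → ℂ) (lam phi : Fin n → ℂ) (z : ℂ) : ℂ :=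
  (fun p : ZMod m × Fin n => if p.1 = 0 then gAbs m g else 0) ⬝ᵥ
    ((Qtilde m n g lam phi *
        (z • (1 : Matrix (ZMod m × Fin n) (ZMod m × Fin n) ℂ) - Ltilde m n lam).adjugate) *ᵥ
      fun p : ZMod m × Fin n => if p.1 = 0 then (1 : ℂ) else 0)

/-!
`z • 1 - L̃` is block diagonal, with the block `z • 1 - λⱼ • S` for each `j`, where `S` is the
cyclic shift of `ℤ/mℤ`. As `S ^ m = 1`, the geometric sum `N = Σₖ (λS)ᵏ z^{m-1-k}` satisfies
`(z - λS) N = z^m - λ^m = det (z - λS)`, so `N` is the adjugate of the block whenever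
`z^m ≠ λ^m`, and the adjugate of `z • 1 - L̃` is block diagonal with blocks
`∏_{ℓ≠j} (z^m - λ_ℓ^m) • N`. The matrix `Q̃` only lives on the entries `h = i + 1`, where `N` has
the single term `z^{m-2} λ` (from `k = 1`); this gives the formula off the finitely many roots of
`∏ⱼ (z^m - λⱼ^m)`, and continuity in `z` gives it everywhere.
-/

open Finset

namespace Matrix

variable {R : Type*} [CommRing R]

theorem adjugate_eq_of_mul_eq_det_smul [IsDomain R] {ι : Type*} [Fintype ι] [DecidableEq ι]
    {A B : Matrix ι ι R} (hA : A.det ≠ 0) (h : A * B = A.det • 1) : A.adjugate = B := by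
  have := congrArg (A.adjugate * ·) h
  simp only [← Matrix.mul_assoc, adjugate_mul, Matrix.smul_mul, Matrix.one_mul,
    Matrix.mul_smul, Matrix.mul_one] at this
  exact (smul_right_injective _ hA this).symm

theorem adjugate_blockDiagonal [IsDomain R] {ι o : Type*} [Fintype ι] [DecidableEq ι]
    [Fintype o] [DecidableEq o] (B : o → Matrix ι ι R) (hB : ∀ j, (B j).det ≠ 0) :
    (blockDiagonal B).adjugate =
      blockDiagonal fun j => (∏ l ∈ univ.erase j, (B l).det) • (B j).adjugate := by
  apply adjugate_eq_of_mul_eq_det_smul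
  · rw [det_blockDiagonal]; exact prod_ne_zero_iff.mpr fun j _ => hB j
  · rw [← blockDiagonal_mul, det_blockDiagonal, ← blockDiagonal_one, ← blockDiagonal_smul]
    congr 1; ext1 j
    rw [Pi.smul_apply, Pi.one_apply, Matrix.mul_smul, mul_adjugate, smul_smul,
      prod_erase_mul _ _ (mem_univ j)]

theorem trace_mul_blockDiagonal {ι o : Type*} [Fintype ι] [DecidableEq ι]
    [Fintype o] [DecidableEq o] (A : Matrix (ι × o) (ι × o) R) (B : o → Matrix ι ι R) :
    trace (A * blockDiagonal B) = ∑ j, trace (A.submatrix (·, j) (·, j) * B j) := by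
  simp only [trace, diag_apply, mul_apply, blockDiagonal_apply, mul_ite, mul_zero,
    Fintype.sum_prod_type, sum_ite_eq', mem_univ, if_true, submatrix_apply]
  exact sum_comm

def cyclicShift (m : ℕ) : Matrix (ZMod m) (ZMod m) R :=
  of fun h i => if i = h + 1 then 1 else 0

@[simp]
theorem cyclicShift_apply (m : ℕ) (h i : ZMod m) :
    (cyclicShift m : Matrix (ZMod m) (ZMod m) R) h i = if i = h + 1 then 1 else 0 := rfl

/- Laplace expansion along column `0`: only rows `0` and `last` contribute, and the two minors are
triangular with diagonals `z` and `-a`. -/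
theorem det_fin_cyclic_bidiagonal (k : ℕ) (z a : R) :
    (of fun i j : Fin (k + 1) => (if i = j then z else 0) - if j = i + 1 then a else 0).det =
      z ^ (k + 1) - a ^ (k + 1) := by
  rcases Nat.eq_zero_or_pos k with rfl | hk
  · simp [det_unique, Subsingleton.elim (0 : Fin 1) 1]
  set M : Matrix (Fin (k + 1)) (Fin (k + 1)) R :=
    of fun i j => (if i = j then z else 0) - if j = i + 1 then a else 0
  have hfirst : (M.submatrix Fin.succ Fin.succ).det = z ^ k := by
    rw [det_of_isUpperTriangular]
    · simp [M, hk.ne']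
    · intro i j (hij : (j : ℕ) < i)
      simp only [M, submatrix_apply, of_apply, Fin.ext_iff, Fin.val_succ, Fin.val_add_one,
        Fin.val_last]
      split_ifs <;> first | contradiction | omega | simp
  have hlast : (M.submatrix Fin.castSucc Fin.succ).det = (-a) ^ k := by
    rw [det_of_isLowerTriangular]
    · simp [M, Fin.ext_iff]
    · intro i j (hij : (i : ℕ) < j)
      simp only [M, submatrix_apply, of_apply, Fin.ext_iff, Fin.val_succ, Fin.val_add_one,
        Fin.val_castSucc, Fin.val_last]
      split_ifs <;> first | contradiction | omega | simp
  have hsign : (-1 : R) ^ k * (-a) ^ k = a ^ k := by rw [← mul_pow]; simp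
  have hlast_ne_zero : Fin.last k ≠ 0 := by
    rw [ne_eq, Fin.ext_iff, Fin.val_last, Fin.val_zero]; omega
  rw [det_succ_column_zero, Fintype.sum_eq_add 0 (Fin.last k) hlast_ne_zero.symm]
  · have h00 : M 0 0 = z := by simp [M, hk.ne']
    have hlast0 : M (Fin.last k) 0 = -a := by simp [M, hlast_ne_zero]
    rw [Fin.succAbove_zero, Fin.succAbove_last, hfirst, hlast, h00, hlast0, Fin.val_zero,
      Fin.val_last]
    linear_combination (-a) * hsign
  · intro i ⟨hi0, hilast⟩
    have : i + 1 ≠ 0 := by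
      rw [← Fin.succ_castPred_eq_add_one hilast]; exact Fin.succ_ne_zero _
    simp [M, hi0, this.symm]

variable (m : ℕ) [NeZero m]

theorem cyclicShift_pow_apply (k : ℕ) (h i : ZMod m) :
    ((cyclicShift m : Matrix (ZMod m) (ZMod m) R) ^ k) h i = if i = h + k then 1 else 0 := by
  induction k generalizing h with
  | zero => simp [one_apply, eq_comm]
  | succ k ih =>
    simp only [pow_succ', mul_apply, ih, cyclicShift_apply, ite_mul, one_mul, zero_mul,
      sum_ite_eq', mem_univ, if_true]
    rw [Nat.cast_succ, add_comm (k : ZMod m), add_assoc]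

theorem cyclicShift_pow_self : (cyclicShift m : Matrix (ZMod m) (ZMod m) R) ^ m = 1 := by
  ext h i
  simp [cyclicShift_pow_apply, one_apply, eq_comm]

theorem det_smul_one_sub_smul_cyclicShift (z a : R) :
    (z • 1 - a • cyclicShift m : Matrix (ZMod m) (ZMod m) R).det = z ^ m - a ^ m := by
  have hM : (z • 1 - a • cyclicShift m : Matrix (ZMod m) (ZMod m) R) =
      of fun i j => (if i = j then z else 0) - if j = i + 1 then a else 0 := by
    ext i j; simp [one_apply]
  obtain ⟨k, rfl⟩ : ∃ k, m = k + 1 := Nat.exists_eq_succ_of_ne_zero (NeZero.ne m)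
  rw [hM]
  exact det_fin_cyclic_bidiagonal k z a

def cyclicShiftAdj (a z : R) : Matrix (ZMod m) (ZMod m) R :=
  ∑ k ∈ range m, (a • cyclicShift m) ^ k * (z • 1) ^ (m - 1 - k)

theorem smul_one_sub_smul_cyclicShift_mul_cyclicShiftAdj (a z : R) :
    (z • 1 - a • cyclicShift m) * cyclicShiftAdj m a z = (z ^ m - a ^ m) • 1 := by
  rw [cyclicShiftAdj, ((Commute.one_right _).smul_right z).mul_neg_geom_sum₂, smul_pow,
    smul_pow, cyclicShift_pow_self, one_pow, sub_smul]

theorem cyclicShiftAdj_apply_add_one (hm : 2 ≤ m) (a z : R) (i : ZMod m) :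
    cyclicShiftAdj m a z i (i + 1) = z ^ (m - 2) * a := by
  simp only [cyclicShiftAdj, sum_apply, smul_pow, one_pow, smul_mul_smul, Matrix.mul_one,
    smul_apply, cyclicShift_pow_apply, add_right_inj, smul_eq_mul]
  rw [sum_eq_single 1]
  · simp [show m - 1 - 1 = m - 2 by omega, mul_comm]
  · intro k hk hk1
    have hk_cast : (1 : ZMod m) ≠ k := by
      rw [← Nat.cast_one, Ne, ZMod.natCast_eq_natCast_iff', Nat.mod_eq_of_lt (mem_range.mp hk),
        Nat.one_mod_eq_one.mpr (by omega)]
      exact Ne.symm hk1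
    rw [if_neg hk_cast, mul_zero]
  · intro h1; exact absurd (mem_range.mpr (by omega)) h1

theorem adjugate_smul_one_sub_smul_cyclicShift [IsDomain R] {a z : R} (h : z ^ m ≠ a ^ m) :
    (z • 1 - a • cyclicShift m : Matrix (ZMod m) (ZMod m) R).adjugate = cyclicShiftAdj m a z := by
  apply adjugate_eq_of_mul_eq_det_smul
  · rwa [det_smul_one_sub_smul_cyclicShift, sub_ne_zero]
  · rw [det_smul_one_sub_smul_cyclicShift, smul_one_sub_smul_cyclicShift_mul_cyclicShiftAdj]

end Matrix

theorem ZMod.sum_univ_eq_sum_range {M : Type*} [AddCommMonoid M] (m : ℕ) [NeZero m]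
    (f : ZMod m → M) : ∑ h, f h = ∑ i ∈ range m, f i := by
  refine sum_nbij' ZMod.val (fun i => i) (fun h _ => mem_range.mpr h.val_lt) (by simp)
    (fun h _ => ZMod.natCast_zmod_val h) (fun i hi => ZMod.val_cast_of_lt (mem_range.mp hi)) ?_
  simp

theorem finite_setOf_exists_pow_eq {ι : Type*} [Finite ι] {m : ℕ} (hm : 0 < m) (c : ι → ℂ) :
    {z : ℂ | ∃ j, z ^ m = c j}.Finite := by
  rw [Set.ofPred_exists]
  exact Set.finite_iUnion fun j =>
    (Polynomial.nthRoots m (c j)).toFinset.finite_toSet.subset fun z hz => by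
      simpa [Polynomial.mem_nthRoots hm] using hz

section

variable (m n : ℕ) (lam : Fin n → ℂ)

theorem Ltilde_eq_blockDiagonal :
    Ltilde m n lam = blockDiagonal fun j => lam j • cyclicShift m := by
  ext ⟨h, j⟩ ⟨i, k⟩
  simp [Ltilde, blockDiagonal_apply, ite_and, eq_comm (a := k)]

theorem smul_one_sub_Ltilde [NeZero m] (z : ℂ) :
    z • 1 - Ltilde m n lam = blockDiagonal fun j => z • 1 - lam j • cyclicShift m := by
  rw [Ltilde_eq_blockDiagonal, ← blockDiagonal_one, ← blockDiagonal_smul, ← blockDiagonal_sub]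
  rfl

theorem adjugate_smul_one_sub_Ltilde [NeZero m] {z : ℂ} (hz : ∀ j, z ^ m ≠ lam j ^ m) :
    (z • 1 - Ltilde m n lam).adjugate = blockDiagonal fun j =>
      (∏ l ∈ univ.erase j, (z ^ m - lam l ^ m)) • cyclicShiftAdj m (lam j) z := by
  rw [smul_one_sub_Ltilde, adjugate_blockDiagonal]
  · simp only [det_smul_one_sub_smul_cyclicShift, adjugate_smul_one_sub_smul_cyclicShift m (hz _)]
  · intro j
    rw [det_smul_one_sub_smul_cyclicShift, sub_ne_zero]
    exact hz j

theorem trace_submatrix_Qtilde_mul [NeZero m] (g : ZMod m → ℂ) (phi : Fin n → ℂ) (j : Fin n)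
    (N : Matrix (ZMod m) (ZMod m) ℂ) :
    trace ((Qtilde m n g lam phi).submatrix (·, j) (·, j) * N) =
      ∑ i, (phi j + cConst m g i / lam j) * N i (i + 1) := by
  simp only [trace, Matrix.diag, mul_apply, submatrix_apply, Qtilde, of_apply, if_true, ite_mul,
    zero_mul]
  rw [sum_comm]
  simp

theorem Dfun_eq_of_forall_pow_ne [NeZero m] (hm : 2 ≤ m) (phi : Fin n → ℂ) (g : ZMod m → ℂ)
    {z : ℂ} (hz : ∀ j, z ^ m ≠ lam j ^ m) :
    Dfun m n g lam phi z =
      ∑ i ∈ range m, ∑ j : Fin n,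
        (phi j + cConst m g (i : ZMod m) / lam j) * lam j * z ^ (m - 2) *
          ∏ l ∈ univ.erase j, (z ^ m - lam l ^ m) := by
  simp only [Dfun, adjugate_smul_one_sub_Ltilde m n lam hz, trace_mul_blockDiagonal,
    trace_submatrix_Qtilde_mul, Matrix.smul_apply, cyclicShiftAdj_apply_add_one m hm, smul_eq_mul]
  rw [sum_comm, ZMod.sum_univ_eq_sum_range]
  exact sum_congr rfl fun i _ => sum_congr rfl fun j _ => by ring

end

theorem Dfun_formula_general (m n : ℕ) [NeZero m] (hm : 2 ≤ m)
    (lam phi : Fin n → ℂ) (g : ZMod m → ℂ) (z : ℂ) :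
    Dfun m n g lam phi z =
      ∑ i ∈ Finset.range m, ∑ j : Fin n,
        (phi j + cConst m g (i : ZMod m) / lam j) * lam j * z ^ (m - 2) *
          ∏ l ∈ Finset.univ.erase j, (z ^ m - lam l ^ m) := by
  have hD : Continuous (Dfun m n g lam phi) := by unfold Dfun; fun_prop
  have hdense : Dense {w : ℂ | ∀ j, w ^ m ≠ lam j ^ m} := by
    simpa [Set.compl_ofPred] using
      (finite_setOf_exists_pow_eq (by omega) fun j => lam j ^ m).countable.dense_compl ℂ
  have heqOn : Set.EqOn (Dfun m n g lam phi) _ _ := fun w hw =>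
    Dfun_eq_of_forall_pow_ne m n lam hm phi g hw
  exact congrFun (hD.ext_on hdense (by fun_prop) heqOn) z

/-- For `m ≥ 2`,
`D(z) = Σ_{i=0}^{m−1} Σ_{j=1}^{n} (φⱼ + cᵢ/λⱼ) · λⱼ · z^{m−2} · ∏_{ℓ≠j} (z^m − λ_ℓ^m)`. -/
theorem Dfun_formula (m n : ℕ) [NeZero m] (hm : 2 ≤ m) (hn : 0 < n)
    (lam phi : Fin n → ℂ) (g : ZMod m → ℂ)
    (hlam : ∀ j, lam j ≠ 0)
    (hsep : ∀ j k : Fin n, j ≠ k → lam j ^ m ≠ lam k ^ m) (z : ℂ) :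
    Dfun m n g lam phi z =
      ∑ i ∈ Finset.range m, ∑ j : Fin n,
        (phi j + cConst m g (i : ZMod m) / lam j) * lam j * z ^ (m - 2) *
          ∏ l ∈ Finset.univ.erase j, (z ^ m - lam l ^ m) :=
  Dfun_formula_general m n hm lam phi g z
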